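/- In the FedAvg setup, fix a round t, a client k, and a neuron h, and suppose the client-level activation set is a singleton: A^h_{t,k} = ∪_{i=0}^{n−1} A^h(θ_{t,k,i}, B_{t,k,i}) = {x} for some x ∈ ℝ^d. Then ΔW^h_{t,k} = Δb^h_{t,k} · x, where ΔW^h_{t,k} = W^h_{t,k,n} − W^h_{t−1} and Δb^h_{t,k} = b^h_{t,k,n} − b^h_{t−1}. Consequently, if Δb^h_{t,k} ≠ 0, the sample x can be recovered from the client's update of neuron h as x = ΔW^h_{t,k} / Δb^h_{t,k}. -/

import Mathlib

noncomputable section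

/-- Pre-activation `W^h · x + b^h` of neuron `h` on sample `x`. -/
def preact {d H : ℕ} (W : Fin H → Fin d → ℝ) (b : Fin H → ℝ) (x : Fin d → ℝ)
    (h : Fin H) : ℝ :=
  (∑ j, W h j * x j) + b h

/-- Componentwise ReLU output of the first layer. -/
def reluVec {d H : ℕ} (W : Fin H → Fin d → ℝ) (b : Fin H → ℝ) (x : Fin d → ℝ) :
    Fin H → ℝ :=
  fun h => max (preact W b x h) 0

/-- `F_{φ,y}(z) = ℓ(f(φ, z), y)`. -/
def Floss {H r C : ℕ} {Y : Type*} (f : (Fin r → ℝ) → (Fin H → ℝ) → Fin C → ℝ)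
    (l : (Fin C → ℝ) → Y → ℝ) (φ : Fin r → ℝ) (y : Y) (z : Fin H → ℝ) : ℝ :=
  l (f φ z) y

/-- Partial derivative of `F : ℝ^H → ℝ` in the `h`-th coordinate at `z`. -/
def dFh {H : ℕ} (F : (Fin H → ℝ) → ℝ) (z : Fin H → ℝ) (h : Fin H) : ℝ :=
  fderiv ℝ F z (Pi.single h 1)

/-- The loss of the model `θ = (W, b, φ)` on the batch `B`:
`L(θ; B) = ∑_{(x,y) ∈ B} ℓ(f(φ, ReLU(W x + b)), y)`. -/
def batchLoss {d H r C : ℕ} {Y : Type*} (f : (Fin r → ℝ) → (Fin H → ℝ) → Fin C → ℝ)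
    (l : (Fin C → ℝ) → Y → ℝ)
    (θ : (Fin H → Fin d → ℝ) × (Fin H → ℝ) × (Fin r → ℝ))
    (B : Finset ((Fin d → ℝ) × Y)) : ℝ :=
  ∑ p ∈ B, Floss f l θ.2.2 p.2 (reluVec θ.1 θ.2.1 p.1)

open Classical in
/-- Batch-level activation set `A^h(θ, B)` of neuron `h`, as a finset of
sample/label pairs of the batch. -/
def activB {d H r C : ℕ} {Y : Type*} (f : (Fin r → ℝ) → (Fin H → ℝ) → Fin C → ℝ)
    (l : (Fin C → ℝ) → Y → ℝ)
    (θ : (Fin H → Fin d → ℝ) × (Fin H → ℝ) × (Fin r → ℝ))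
    (B : Finset ((Fin d → ℝ) × Y)) (h : Fin H) : Finset ((Fin d → ℝ) × Y) :=
  B.filter (fun p => 0 < preact θ.1 θ.2.1 p.1 h ∧
    dFh (Floss f l θ.2.2 p.2) (reluVec θ.1 θ.2.1 p.1) h ≠ 0)

/-- The gradient of a function on the parameter space, assembled coordinatewise
from directional derivatives. -/
def gradP {d H r : ℕ} (L : ((Fin H → Fin d → ℝ) × (Fin H → ℝ) × (Fin r → ℝ)) → ℝ)
    (θ : (Fin H → Fin d → ℝ) × (Fin H → ℝ) × (Fin r → ℝ)) :
    (Fin H → Fin d → ℝ) × (Fin H → ℝ) × (Fin r → ℝ) :=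
  (fun h j => fderiv ℝ L θ (Pi.single h (Pi.single j 1), 0, 0),
   fun h => fderiv ℝ L θ (0, Pi.single h 1, 0),
   fun s => fderiv ℝ L θ (0, 0, Pi.single s 1))

/-- Round-level activation set `A^h_t` of neuron `h`: the set of samples activating
neuron `h` at some local update of some client during the round. -/
def roundActiv {d H r C K : ℕ} {Y : Type*} (f : (Fin r → ℝ) → (Fin H → ℝ) → Fin C → ℝ)
    (l : (Fin C → ℝ) → Y → ℝ) (n : ℕ)
    (θ : Fin K → ℕ → ((Fin H → Fin d → ℝ) × (Fin H → ℝ) × (Fin r → ℝ)))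
    (Bt : Fin K → ℕ → Finset ((Fin d → ℝ) × Y)) (h : Fin H) : Set (Fin d → ℝ) :=
  {x | ∃ k, ∃ i < n, ∃ y, (x, y) ∈ activB f l (θ k i) (Bt k i) h}

/-!
At a nondegenerate point the ReLU layer is differentiable, and `W^h` and `b^h` enter the loss
of a sample `x'` only through the pre-activation `W^h · x' + b^h`. Hence the `W^h`-gradient of
a batch loss is `∑ g_p • x_p` and the `b^h`-gradient is `∑ g_p`, where `g_p ≠ 0` only for
samples in the activation set of `h`. If that set is `{x}` at every local step, each step moves
`W^h` by the step of `b^h` times `x`, and summing the `n` steps gives `ΔW^h = Δb^h • x`.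
-/

open Filter Topology

abbrev Params (d H r : ℕ) := (Fin H → Fin d → ℝ) × (Fin H → ℝ) × (Fin r → ℝ)

namespace Params

variable {d H r : ℕ}

def weightDir (h : Fin H) (j : Fin d) : Params d H r := (Pi.single h (Pi.single j 1), 0, 0)

def biasDir (h : Fin H) : Params d H r := (0, Pi.single h 1, 0)

end Params

open Params

section SampleLoss

variable {d H r : ℕ}

lemma preact_add (W W' : Fin H → Fin d → ℝ) (b b' : Fin H → ℝ) (x : Fin d → ℝ) (h : Fin H) :
    preact (W + W') (b + b') x h = preact W b x h + preact W' b' x h := by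
  simp only [preact, Pi.add_apply, add_mul, Finset.sum_add_distrib]
  ring

lemma preact_smul (a : ℝ) (W : Fin H → Fin d → ℝ) (b : Fin H → ℝ) (x : Fin d → ℝ) (h : Fin H) :
    preact (a • W) (a • b) x h = a * preact W b x h := by
  simp only [preact, Pi.smul_apply, smul_eq_mul, mul_add, Finset.mul_sum, mul_assoc]

lemma preact_weightDir (x : Fin d → ℝ) (h h' : Fin H) (j : Fin d) :
    preact (weightDir (r := r) h j).1 (weightDir (r := r) h j).2.1 x h' =
      if h' = h then x j else 0 := by
  by_cases hh : h' = h <;> simp [preact, weightDir, Pi.single_apply, hh]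

lemma preact_biasDir (x : Fin d → ℝ) (h h' : Fin H) :
    preact (biasDir (d := d) (r := r) h).1 (biasDir (d := d) (r := r) h).2.1 x h' =
      if h' = h then 1 else 0 := by
  simp [preact, biasDir, Pi.single_apply]

lemma continuous_preact (x : Fin d → ℝ) (h : Fin H) :
    Continuous (fun ψ : Params d H r => preact ψ.1 ψ.2.1 x h) := by
  unfold preact
  fun_prop

open Classical in
def reluDeriv (θ : Params d H r) (x : Fin d → ℝ) : Params d H r →L[ℝ] (Fin H → ℝ) :=
  LinearMap.toContinuousLinearMap
    { toFun := fun ψ h => if 0 < preact θ.1 θ.2.1 x h then preact ψ.1 ψ.2.1 x h else 0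
      map_add' := fun ψ χ => by
        funext h
        simp only [Prod.fst_add, Prod.snd_add, preact_add, Pi.add_apply]
        split_ifs <;> simp
      map_smul' := fun a ψ => by
        funext h
        simp only [Prod.smul_fst, Prod.smul_snd, preact_smul, Pi.smul_apply, smul_eq_mul,
          RingHom.id_apply]
        split_ifs <;> simp }

lemma reluDeriv_apply (θ ψ : Params d H r) (x : Fin d → ℝ) (h : Fin H) :
    reluDeriv θ x ψ h = if 0 < preact θ.1 θ.2.1 x h then preact ψ.1 ψ.2.1 x h else 0 := by
  classical
  simp [reluDeriv]

lemma reluDeriv_weightDir (θ : Params d H r) (x : Fin d → ℝ) (h : Fin H) (j : Fin d) :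
    reluDeriv θ x (weightDir h j) = x j • reluDeriv θ x (biasDir h) := by
  funext h'
  simp only [reluDeriv_apply, Pi.smul_apply, smul_eq_mul, preact_weightDir, preact_biasDir]
  split_ifs <;> simp

lemma reluDeriv_biasDir (θ : Params d H r) (x : Fin d → ℝ) (h : Fin H) :
    reluDeriv θ x (biasDir h) =
      if 0 < preact θ.1 θ.2.1 x h then Pi.single h 1 else 0 := by
  funext h'
  simp only [reluDeriv_apply, preact_biasDir]
  by_cases hh : h' = h
  · subst hh
    split_ifs <;> simp_all
  · split_ifs <;> simp [hh]

/-- Nondegeneracy keeps every neuron on one side of the kink near `θ`, where ReLU is either the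
identity or zero. -/
lemma hasFDerivAt_reluVec {θ : Params d H r} {x : Fin d → ℝ}
    (hx : ∀ h, preact θ.1 θ.2.1 x h ≠ 0) :
    HasFDerivAt (fun ψ : Params d H r => reluVec ψ.1 ψ.2.1 x) (reluDeriv θ x) θ := by
  refine (reluDeriv θ x).hasFDerivAt.congr_of_eventuallyEq ?_
  have hlocal : ∀ h, ∀ᶠ ψ in 𝓝 θ, reluVec ψ.1 ψ.2.1 x h = reluDeriv θ x ψ h := by
    intro h
    have hcont := (continuous_preact (r := r) x h).continuousAt (x := θ)
    simp only [reluDeriv_apply]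
    rcases (hx h).lt_or_gt with hneg | hpos
    · filter_upwards [hcont.eventually (gt_mem_nhds hneg)] with ψ hψ
      simp [reluVec, hψ.le, hneg.not_gt]
    · filter_upwards [hcont.eventually (lt_mem_nhds hpos)] with ψ hψ
      simp [reluVec, hψ.le, hpos]
  filter_upwards [eventually_all.2 hlocal] with ψ hψ
  exact funext hψ

def sampleLoss (G : (Fin r → ℝ) × (Fin H → ℝ) → ℝ) (x : Fin d → ℝ) (ψ : Params d H r) : ℝ :=
  G (ψ.2.2, reluVec ψ.1 ψ.2.1 x)

variable {G : (Fin r → ℝ) × (Fin H → ℝ) → ℝ} {x : Fin d → ℝ} {θ : Params d H r}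

lemma hasFDerivAt_sampleLoss (hG : DifferentiableAt ℝ G (θ.2.2, reluVec θ.1 θ.2.1 x))
    (hx : ∀ h, preact θ.1 θ.2.1 x h ≠ 0) :
    HasFDerivAt (sampleLoss G x)
      ((fderiv ℝ G (θ.2.2, reluVec θ.1 θ.2.1 x)).comp
        (((ContinuousLinearMap.snd ℝ _ _).comp (ContinuousLinearMap.snd ℝ _ _)).prod
          (reluDeriv θ x))) θ :=
  hG.hasFDerivAt.comp θ (hasFDerivAt_snd.snd.prodMk (hasFDerivAt_reluVec hx))

/-- Moving `W^h_j` acts on the sample loss exactly as moving `b^h` scaled by `x_j`, since both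
enter only through the pre-activation `W^h · x + b^h`. -/
lemma fderiv_sampleLoss_weightDir (hG : DifferentiableAt ℝ G (θ.2.2, reluVec θ.1 θ.2.1 x))
    (hx : ∀ h, preact θ.1 θ.2.1 x h ≠ 0) (h : Fin H) (j : Fin d) :
    fderiv ℝ (sampleLoss G x) θ (weightDir h j) =
      x j * fderiv ℝ (sampleLoss G x) θ (biasDir h) := by
  have hdir : (((weightDir h j : Params d H r).2.2, reluDeriv θ x (weightDir h j)) :
      (Fin r → ℝ) × (Fin H → ℝ)) =
        x j • ((biasDir h : Params d H r).2.2, reluDeriv θ x (biasDir h)) := by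
    rw [reluDeriv_weightDir]
    ext <;> simp [weightDir, biasDir]
  rw [(hasFDerivAt_sampleLoss hG hx).fderiv]
  simp only [ContinuousLinearMap.comp_apply, ContinuousLinearMap.prod_apply,
    ContinuousLinearMap.coe_snd']
  rw [hdir, map_smul, smul_eq_mul]

lemma fderiv_sampleLoss_biasDir (hG : DifferentiableAt ℝ G (θ.2.2, reluVec θ.1 θ.2.1 x))
    (hx : ∀ h, preact θ.1 θ.2.1 x h ≠ 0) (h : Fin H) :
    fderiv ℝ (sampleLoss G x) θ (biasDir h) =
      if 0 < preact θ.1 θ.2.1 x h then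
        dFh (fun z => G (θ.2.2, z)) (reluVec θ.1 θ.2.1 x) h else 0 := by
  have hpartial : HasFDerivAt (fun z => G (θ.2.2, z))
      ((fderiv ℝ G (θ.2.2, reluVec θ.1 θ.2.1 x)).comp (ContinuousLinearMap.inr ℝ _ _))
      (reluVec θ.1 θ.2.1 x) :=
    hG.hasFDerivAt.comp _ (hasFDerivAt_prodMk_right _ _)
  rw [(hasFDerivAt_sampleLoss hG hx).fderiv, dFh, hpartial.fderiv]
  simp only [ContinuousLinearMap.comp_apply, ContinuousLinearMap.prod_apply,
    ContinuousLinearMap.coe_snd', ContinuousLinearMap.inr_apply, reluDeriv_biasDir]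
  split_ifs <;> simp [biasDir, Prod.mk_zero_zero]

end SampleLoss

section BatchLoss

variable {d H r C : ℕ} {Y : Type*} {f : (Fin r → ℝ) → (Fin H → ℝ) → Fin C → ℝ}
  {l : (Fin C → ℝ) → Y → ℝ} {θ : Params d H r} {B : Finset ((Fin d → ℝ) × Y)} {h : Fin H}

lemma mem_activB_of_fderiv_sampleLoss_ne_zero
    (hf : Differentiable ℝ (fun q : (Fin r → ℝ) × (Fin H → ℝ) => f q.1 q.2))
    (hl : ∀ y, Differentiable ℝ (fun u => l u y)) {p : (Fin d → ℝ) × Y} (hp : p ∈ B)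
    (hx : ∀ h', preact θ.1 θ.2.1 p.1 h' ≠ 0)
    (hne : fderiv ℝ (sampleLoss (fun q => l (f q.1 q.2) p.2) p.1) θ (biasDir h) ≠ 0) :
    p ∈ activB f l θ B h := by
  rw [fderiv_sampleLoss_biasDir (G := fun q => l (f q.1 q.2) p.2) ((hl p.2).comp hf _) hx] at hne
  split_ifs at hne with hpos
  · exact Finset.mem_filter.2 ⟨hp, hpos, hne⟩
  · exact absurd rfl hne

lemma gradP_batchLoss_weight_eq_smul
    (hf : Differentiable ℝ (fun q : (Fin r → ℝ) × (Fin H → ℝ) => f q.1 q.2))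
    (hl : ∀ y, Differentiable ℝ (fun u => l u y))
    (hnd : ∀ h' : Fin H, ∀ p ∈ B, preact θ.1 θ.2.1 p.1 h' ≠ 0) {x : Fin d → ℝ}
    (hactiv : ∀ p ∈ activB f l θ B h, p.1 = x) :
    (gradP (fun ψ => batchLoss f l ψ B) θ).1 h =
      (gradP (fun ψ => batchLoss f l ψ B) θ).2.1 h • x := by
  have hG : ∀ y, Differentiable ℝ (fun q : (Fin r → ℝ) × (Fin H → ℝ) => l (f q.1 q.2) y) :=
    fun y => (hl y).comp hf
  have hderiv : ∀ v, fderiv ℝ (fun ψ => batchLoss f l ψ B) θ v =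
      ∑ p ∈ B, fderiv ℝ (sampleLoss (fun q => l (f q.1 q.2) p.2) p.1) θ v := fun v => by
    rw [show (fun ψ => batchLoss f l ψ B) =
        fun ψ => ∑ p ∈ B, sampleLoss (fun q => l (f q.1 q.2) p.2) p.1 ψ from rfl,
      fderiv_fun_sum fun p hp => (hasFDerivAt_sampleLoss (hG p.2 _) (hnd · p hp)).differentiableAt,
      sum_apply]
  funext j
  change fderiv ℝ _ θ (weightDir h j) = fderiv ℝ _ θ (biasDir h) * x j
  rw [hderiv, hderiv, Finset.sum_mul]
  refine Finset.sum_congr rfl fun p hp => ?_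
  rw [fderiv_sampleLoss_weightDir (hG p.2 _) (hnd · p hp)]
  by_cases hzero : fderiv ℝ (sampleLoss (fun q => l (f q.1 q.2) p.2) p.1) θ (biasDir h) = 0
  · simp [hzero]
  · -- a sample with nonzero `b^h`-derivative is in the activation set, hence equals `x`
    rw [hactiv p (mem_activB_of_fderiv_sampleLoss_ne_zero hf hl hp (hnd · p hp) hzero), mul_comm]

end BatchLoss

lemma sub_eq_sub_smul_of_forall_succ {R M : Type*} [Ring R] [AddCommGroup M] [Module R M]
    {w : ℕ → M} {b : ℕ → R} {x : M} {n : ℕ}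
    (hstep : ∀ i < n, w (i + 1) - w i = (b (i + 1) - b i) • x) :
    w n - w 0 = (b n - b 0) • x := by
  induction n with
  | zero => simp
  | succ n ih =>
    calc w (n + 1) - w 0 = (w (n + 1) - w n) + (w n - w 0) := by abel
      _ = (b (n + 1) - b 0) • x := by
        rw [hstep n n.lt_succ_self, ih fun i hi => hstep i (hi.trans n.lt_succ_self), ← add_smul,
          sub_add_sub_cancel]

theorem stmt12_general {d H r C : ℕ} {Y : Type*}
    (f : (Fin r → ℝ) → (Fin H → ℝ) → Fin C → ℝ)
    (l : (Fin C → ℝ) → Y → ℝ)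
    (hf : Differentiable ℝ (fun q : (Fin r → ℝ) × (Fin H → ℝ) => f q.1 q.2))
    (hl : ∀ y, Differentiable ℝ (fun u => l u y))
    (n : ℕ) (η : ℝ)
    (θprev : (Fin H → Fin d → ℝ) × (Fin H → ℝ) × (Fin r → ℝ))
    (Bt : ℕ → Finset ((Fin d → ℝ) × Y))
    (θ : ℕ → ((Fin H → Fin d → ℝ) × (Fin H → ℝ) × (Fin r → ℝ)))
    (hinit : θ 0 = θprev)
    (hstep : ∀ i < n,
      θ (i + 1) = θ i - η • gradP (fun ψ => batchLoss f l ψ (Bt i)) (θ i))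
    (hnd : ∀ i < n, ∀ h' : Fin H, ∀ p ∈ Bt i, preact (θ i).1 (θ i).2.1 p.1 h' ≠ 0)
    (h : Fin H) (x : Fin d → ℝ)
    (hsingle : {x0 : Fin d → ℝ | ∃ i < n, ∃ y, (x0, y) ∈ activB f l (θ i) (Bt i) h} = {x}) :
    (θ n).1 h - θprev.1 h = ((θ n).2.1 h - θprev.2.1 h) • x ∧
    ((θ n).2.1 h - θprev.2.1 h ≠ 0 →
      x = ((θ n).2.1 h - θprev.2.1 h)⁻¹ • ((θ n).1 h - θprev.1 h)) := by
  have hgrad : ∀ i < n, (gradP (fun ψ => batchLoss f l ψ (Bt i)) (θ i)).1 h =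
      (gradP (fun ψ => batchLoss f l ψ (Bt i)) (θ i)).2.1 h • x := fun i hi =>
    gradP_batchLoss_weight_eq_smul hf hl (hnd i hi) fun p hp => by
      have hmem : p.1 ∈ {x0 : Fin d → ℝ | ∃ i < n, ∃ y, (x0, y) ∈ activB f l (θ i) (Bt i) h} :=
        ⟨i, hi, p.2, hp⟩
      rwa [hsingle] at hmem
  have hupdate : (θ n).1 h - θprev.1 h = ((θ n).2.1 h - θprev.2.1 h) • x := by
    subst hinit
    refine sub_eq_sub_smul_of_forall_succ (w := fun i => (θ i).1 h) (b := fun i => (θ i).2.1 h)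
      fun i hi => ?_
    simp only [hstep i hi, Prod.fst_sub, Prod.snd_sub, Prod.smul_fst, Prod.smul_snd,
      Pi.sub_apply, Pi.smul_apply, hgrad i hi]
    module
  exact ⟨hupdate, fun hne => by rw [hupdate, inv_smul_smul₀ hne]⟩

theorem stmt12 {d H r C : ℕ} {Y : Type*}
    (f : (Fin r → ℝ) → (Fin H → ℝ) → Fin C → ℝ)
    (l : (Fin C → ℝ) → Y → ℝ)
    (hf : Differentiable ℝ (fun q : (Fin r → ℝ) × (Fin H → ℝ) => f q.1 q.2))
    (hl : ∀ y, Differentiable ℝ (fun u => l u y))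
    (n : ℕ) (η : ℝ) (hη : 0 < η)
    (θprev : (Fin H → Fin d → ℝ) × (Fin H → ℝ) × (Fin r → ℝ))
    (Bt : ℕ → Finset ((Fin d → ℝ) × Y))
    (θ : ℕ → ((Fin H → Fin d → ℝ) × (Fin H → ℝ) × (Fin r → ℝ)))
    (hinj : ∀ i < n, ∀ p ∈ Bt i, ∀ q ∈ Bt i, p.1 = q.1 → p = q)
    (hinit : θ 0 = θprev)
    (hstep : ∀ i < n,
      θ (i + 1) = θ i - η • gradP (fun ψ => batchLoss f l ψ (Bt i)) (θ i))
    (hnd : ∀ i < n, ∀ h' : Fin H, ∀ p ∈ Bt i, preact (θ i).1 (θ i).2.1 p.1 h' ≠ 0)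
    (h : Fin H) (x : Fin d → ℝ)
    (hsingle : {x0 : Fin d → ℝ | ∃ i < n, ∃ y, (x0, y) ∈ activB f l (θ i) (Bt i) h} = {x}) :
    (θ n).1 h - θprev.1 h = ((θ n).2.1 h - θprev.2.1 h) • x ∧
    ((θ n).2.1 h - θprev.2.1 h ≠ 0 →
      x = ((θ n).2.1 h - θprev.2.1 h)⁻¹ • ((θ n).1 h - θprev.1 h)) :=
  stmt12_general f l hf hl n η θprev Bt θ hinit hstep hnd h x hsingle
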